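/- arXiv:1304.2512 — 3 statements merged into one kernel-verified Lean document; each statement's English description precedes it below -/
import Mathlib

section
/- There exist a linear functional S on D(ℝ) and a nonzero φ ∈ D(ℝ) such that the convolution function S∗φ : ℝ → ℂ, defined by (S∗φ)(x) = S(y ↦ φ(x − y)), is not continuous at 0. (In fact one can achieve (S∗φ)(1/n) = n for all n ≥ 1 while (S∗φ)(0) = 0.) -/
/-- `D(ℝ)`: the space of smooth compactly supported functions `ℝ → ℂ`,
as a submodule of `ℝ → ℂ`. -/
noncomputable def TestD : Submodule ℂ (ℝ → ℂ) where
  carrier := {φ | ContDiff ℝ (⊤ : ℕ∞) φ ∧ HasCompactSupport φ}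
  add_mem' hf hg := ⟨hf.1.add hg.1, hf.2.add hg.2⟩
  zero_mem' := ⟨contDiff_const, HasCompactSupport.zero⟩
  smul_mem' c f hf := ⟨hf.1.const_smul c,
    hf.2.mono (Function.support_const_smul_subset c f)⟩

lemma transReflect_mem (φ : TestD) (x : ℝ) :
    (fun y : ℝ => (φ : ℝ → ℂ) (x - y)) ∈ TestD :=
  ⟨φ.2.1.comp (contDiff_const.sub contDiff_id),
    φ.2.2.comp_homeomorph (Homeomorph.subLeft x)⟩

/-!
Take a bump function `φ` and the points `xₘ = 1/(m+1) → 0`. The test functions `y ↦ φ(xₘ - y)`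
are linearly independent: just left of the right end of the support of the `m`-th one, all those
with larger index already vanish. So a linear functional `S` defined on their span by
`S(y ↦ φ(xₘ - y)) = m` extends to all of `D(ℝ)`, and `(S∗φ)(xₘ) = m` is unbounded as `xₘ → 0`.
-/

open Filter

section Translates

variable {R M : Type*} [Ring R] [IsDomain R] [AddCommGroup M] [Module R M]
  [Module.IsTorsionFree R M]

theorem linearIndependent_of_apply_eq_zero_of_lt {X : Type*} {f : ℕ → X → M} (p : ℕ → X)
    (hp : ∀ m, f m (p m) ≠ 0) (hf : ∀ m j, m < j → f j (p m) = 0) :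
    LinearIndependent R f := by
  rw [linearIndependent_iff']
  intro s g hsum i
  induction i using Nat.strong_induction_on with
  | _ i ih =>
    intro hi
    have hsum_at := congrFun hsum (p i)
    simp only [Finset.sum_apply, Pi.smul_apply, Pi.zero_apply] at hsum_at
    rw [Finset.sum_eq_single_of_mem i hi] at hsum_at
    · exact (smul_eq_zero_iff_left (hp i)).mp hsum_at
    · intro j hj hji
      rcases lt_or_gt_of_ne hji with hlt | hgt
      · rw [ih j hlt hj, zero_smul]
      · rw [hf i j hgt, smul_zero]

theorem linearIndependent_sub_comp_of_strictAnti {ψ : ℝ → M}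
    (hne : (Function.support ψ).Nonempty) (hbdd : BddBelow (Function.support ψ))
    {x : ℕ → ℝ} (hx : StrictAnti x) :
    LinearIndependent R (fun m (y : ℝ) => ψ (x m - y)) := by
  set a := sInf (Function.support ψ)
  have hvanish : ∀ t < a, ψ t = 0 := fun t ht =>
    Function.notMem_support.mp fun hmem => (csInf_le hbdd hmem).not_gt ht
  have hnear : ∀ m, ∃ s ∈ Function.support ψ, s < a + (x m - x (m + 1)) := fun m =>
    exists_lt_of_csInf_lt hne (lt_add_of_pos_right a (sub_pos.mpr (hx m.lt_succ_self)))
  choose s hs_mem hs_lt using hnear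
  refine linearIndependent_of_apply_eq_zero_of_lt (fun m => x m - s m) (fun m => ?_)
    (fun m j hmj => hvanish _ ?_)
  · simpa using hs_mem m
  · linarith [hx.antitone (Nat.succ_le_of_lt hmj), hs_lt m]

end Translates

theorem LinearIndependent.exists_linearMap_apply_eq {K V W ι : Type*} [Field K]
    [AddCommGroup V] [Module K V] [AddCommGroup W] [Module K W] {v : ι → V}
    (hv : LinearIndependent K v) (w : ι → W) : ∃ S : V →ₗ[K] W, ∀ i, S (v i) = w i := by
  obtain ⟨S, hS⟩ := LinearMap.exists_extend ((Module.Basis.span hv).constr K w)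
  refine ⟨S, fun i => ?_⟩
  have hvi : (Submodule.span K (Set.range v)).subtype (Module.Basis.span hv i) = v i := by
    simp [Module.Basis.span_apply]
  rw [← hvi, ← LinearMap.comp_apply, hS, Module.Basis.constr_basis]

theorem not_continuousAt_of_apply_eq_natCast {X E : Type*} [TopologicalSpace X] [NormedRing E]
    [NormSMulClass ℤ E] [Nontrivial E] {f : X → E} {x : ℕ → X} {a : X}
    (hx : Tendsto x atTop (nhds a)) (hfx : ∀ m, f (x m) = m) : ¬ ContinuousAt f a := by
  intro hf
  have hlim : Tendsto (fun m : ℕ => (m : E)) atTop (nhds (f a)) := by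
    simpa only [Function.comp_def, hfx] using hf.tendsto.comp hx
  exact hlim.not_tendsto (Metric.disjoint_nhds_cobounded _) tendsto_natCast_atTop_cobounded

namespace TestD

noncomputable def reflectTranslate (φ : TestD) (x : ℝ) : TestD :=
  ⟨fun y => (φ : ℝ → ℂ) (x - y), transReflect_mem φ x⟩

noncomputable def ofBump {c : ℝ} (f : ContDiffBump c) : TestD :=
  ⟨fun t => (f t : ℂ), Complex.ofRealCLM.contDiff.comp f.contDiff,
    f.hasCompactSupport.comp_left Complex.ofReal_zero⟩

theorem support_ofBump {c : ℝ} (f : ContDiffBump c) :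
    Function.support (ofBump f : ℝ → ℂ) = Metric.ball c f.rOut := by
  change Function.support (Complex.ofReal ∘ f) = _
  rw [Function.support_comp_eq _ Complex.ofReal_eq_zero, f.support_eq]

end TestD

/-- The convolution `(S∗φ)(x) = S(y ↦ φ(x−y))` of an algebraic-dual element
`S ∈ D*(ℝ)` with a test function need not be continuous. -/
theorem exists_convolution_not_continuous :
    ∃ (S : TestD →ₗ[ℂ] ℂ) (φ : TestD), (φ : ℝ → ℂ) ≠ 0 ∧
      ¬ ContinuousAt
          (fun x : ℝ => S ⟨fun y : ℝ => (φ : ℝ → ℂ) (x - y), transReflect_mem φ x⟩)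
          0 := by
  let φ := TestD.ofBump (⟨1, 2, one_pos, one_lt_two⟩ : ContDiffBump (0 : ℝ))
  have hsupp : Function.support (φ : ℝ → ℂ) = Metric.ball 0 2 := TestD.support_ofBump _
  let x : ℕ → ℝ := fun m => 1 / ((m : ℝ) + 1)
  have hx : StrictAnti x := fun m n hmn => one_div_lt_one_div_of_lt (by positivity) (by simpa)
  have hne : (Function.support (φ : ℝ → ℂ)).Nonempty := by
    rw [hsupp]; exact Metric.nonempty_ball.mpr two_pos
  have hbdd : BddBelow (Function.support (φ : ℝ → ℂ)) := by
    rw [hsupp]; exact Metric.isBounded_ball.bddBelow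
  have hind : LinearIndependent ℂ (TestD.reflectTranslate φ ∘ x) :=
    .of_comp TestD.subtype (linearIndependent_sub_comp_of_strictAnti hne hbdd hx)
  obtain ⟨S, hS⟩ := hind.exists_linearMap_apply_eq (fun m : ℕ => (m : ℂ))
  refine ⟨S, φ, fun h => by simp [h] at hne, ?_⟩
  exact not_continuousAt_of_apply_eq_natCast tendsto_one_div_add_atTop_nhds_zero_nat hS
end

section
/- Let n ≥ 1 and let a : (Fin n → ℕ) → ℂ be a finitely supported coefficient function that is not identically zero, defining the nonzero constant-coefficient operator P(∂) = Σ_p a_p ∂^p. Then P(∂) has a fundamental solution in the algebraic dual D*(ℝⁿ): there exists a linear functional S on D(ℝⁿ) such that S(Σ_p (−1)^{|p|} a_p ∂^p φ) = φ(0) for all φ ∈ D(ℝⁿ), i.e., P(∂)S equals the Dirac measure δ at the origin. -/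
/-- Partial derivative in the `j`-th coordinate direction:
`(pd j ψ) x = fderiv ℝ ψ x (Pi.single j 1)`. -/
noncomputable def pd {n : ℕ} (j : Fin n) (ψ : (Fin n → ℝ) → ℂ) :
    (Fin n → ℝ) → ℂ :=
  fun x => fderiv ℝ ψ x (Pi.single j 1)

/-- Iterated partial derivative `∂^p` for a multi-index `p : Fin n → ℕ`:
apply, for each `j`, the `j`-th partial derivative `p j` times. -/
noncomputable def multiPD {n : ℕ} (p : Fin n → ℕ) (ψ : (Fin n → ℝ) → ℂ) :
    (Fin n → ℝ) → ℂ :=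
  (List.finRange n).foldr (fun j f => (pd j)^[p j] ∘ f) id ψ

/-- `D(ℝⁿ)`: smooth compactly supported functions `ℝⁿ → ℂ`. -/
noncomputable def DRn (n : ℕ) : Submodule ℂ ((Fin n → ℝ) → ℂ) where
  carrier := {φ | ContDiff ℝ (⊤ : ℕ∞) φ ∧ HasCompactSupport φ}
  add_mem' hf hg := ⟨hf.1.add hg.1, hf.2.add hg.2⟩
  zero_mem' := ⟨contDiff_const, HasCompactSupport.zero⟩
  smul_mem' c f hf := ⟨hf.1.const_smul c,
    hf.2.mono (Function.support_const_smul_subset c f)⟩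

/-!
Under the Fourier transform, `ᵗP(∂)` becomes multiplication by a nonzero polynomial in `ξ`.
Since `𝓕φ` is continuous and a nonzero polynomial cannot vanish on a box, `ᵗP(∂)φ = 0` forces
`𝓕φ = 0`, hence `φ = 0`: the transpose `ᵗP(∂)` is injective on `D(ℝⁿ)`. Every linear functional
on `D(ℝⁿ)`, in particular `δ`, then factors through `ᵗP(∂)` by linear algebra.
-/

open Function SchwartzMap LineDeriv
open scoped FourierTransform Real

theorem Function.Semiconj.list_foldr_iterate {α β ι : Type*} {F : α → β} {D : ι → α → α}
    {E : ι → β → β} (h : ∀ j, Semiconj F (D j) (E j)) (p : ι → ℕ) (L : List ι) :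
    Semiconj F (L.foldr (fun j f => (D j)^[p j] ∘ f) id)
      (L.foldr (fun j f => (E j)^[p j] ∘ f) id) := by
  induction L with
  | nil => exact Semiconj.id_right
  | cons j L ih => exact ((h j).iterate_right (p j)).comp_right ih

theorem List.foldr_iterate_mul_left {ι M : Type*} [CommMonoid M] (χ : ι → M) (p : ι → ℕ)
    (L : List ι) (g : M) :
    L.foldr (fun j f => (χ j * ·)^[p j] ∘ f) id g = (L.map fun j => χ j ^ p j).prod * g := by
  induction L with
  | nil => simp
  | cons j L ih =>
    simp only [List.foldr_cons, comp_apply]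
    rw [ih, mul_left_iterate, List.map_cons, List.prod_cons, mul_assoc]

theorem Module.End.coe_list_prod_map_pow {R M ι : Type*} [Semiring R] [AddCommMonoid M]
    [Module R M] (A : ι → Module.End R M) (p : ι → ℕ) (L : List ι) :
    ⇑(L.map fun j => A j ^ p j).prod = L.foldr (fun j f => (⇑(A j))^[p j] ∘ f) id := by
  induction L with
  | nil => rfl
  | cons j L ih =>
    rw [List.map_cons, List.prod_cons, Module.End.coe_mul, Module.End.coe_pow, ih]
    rfl

theorem MvPolynomial.eq_zero_of_forall_eval_mul_eq_zero {ι : Type*} [Fintype ι]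
    {P : MvPolynomial ι ℂ} (hP : P ≠ 0) {g : (ι → ℝ) → ℂ} (hg : Continuous g)
    (h : ∀ ξ, eval (fun j => (ξ j : ℂ)) P * g ξ = 0) : g = 0 := by
  by_contra hg0
  obtain ⟨η, hη⟩ := Function.ne_iff.1 hg0
  obtain ⟨r, hr, hball⟩ := Metric.isOpen_iff.1 (isOpen_ne_fun hg continuous_const) η hη
  -- `P` vanishes on the ball, which in the sup metric of `ι → ℝ` is a box with infinite sides.
  refine hP (funext_set (fun j => ((↑) : ℝ → ℂ) '' Metric.ball (η j) r) (fun j => ?_) ?_)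
  · rw [Real.ball_eq_Ioo]
    exact (Set.Ioo_infinite (by linarith)).image Complex.ofReal_injective.injOn
  · intro x hx
    choose ξ hξ hξx using fun j => hx j (Set.mem_univ j)
    have hξ_mem : ξ ∈ Metric.ball η r := by
      rw [ball_pi η hr]
      exact fun j _ => hξ j
    obtain rfl : x = fun j => (ξ j : ℂ) := by ext j; exact (hξx j).symm
    rw [map_zero]
    exact (mul_eq_zero.1 (h ξ)).resolve_right (hball hξ_mem)

theorem SchwartzMap.compCLMOfContinuousLinearEquiv_injective {𝕜 D E F : Type*} [RCLike 𝕜]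
    [NormedAddCommGroup D] [NormedSpace ℝ D] [NormedAddCommGroup E] [NormedSpace ℝ E]
    [NormedAddCommGroup F] [NormedSpace ℝ F] [NormedSpace 𝕜 F] [SMulCommClass ℝ 𝕜 F]
    (g : D ≃L[ℝ] E) : Injective (compCLMOfContinuousLinearEquiv 𝕜 (F := F) g) := by
  intro f₁ f₂ h
  ext x
  simpa using congr($h (g.symm x))

section FourierPi

variable {n : ℕ}

/- `Fin n → ℝ` carries the sup norm, so the Fourier transform is transported from
`EuclideanSpace ℝ (Fin n)`. -/
variable (n) in
noncomputable def fourierPi : 𝓢(Fin n → ℝ, ℂ) →L[ℂ] 𝓢(Fin n → ℝ, ℂ) :=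
  compCLMOfContinuousLinearEquiv ℂ (EuclideanSpace.equiv (Fin n) ℝ).symm ∘L
    FourierTransform.fourierCLM ℂ 𝓢(EuclideanSpace ℝ (Fin n), ℂ) ∘L
    compCLMOfContinuousLinearEquiv ℂ (EuclideanSpace.equiv (Fin n) ℝ)

theorem fourierPi_apply (f : 𝓢(Fin n → ℝ, ℂ)) (ξ : Fin n → ℝ) :
    fourierPi n f ξ =
      𝓕 (compCLMOfContinuousLinearEquiv ℂ (EuclideanSpace.equiv (Fin n) ℝ) f) (WithLp.toLp 2 ξ) :=
  rfl

variable (n) in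
theorem fourierPi_injective : Injective (fourierPi n) :=
  (compCLMOfContinuousLinearEquiv_injective (𝕜 := ℂ) _).comp <|
    (FourierTransform.fourierEquiv ℂ 𝓢(EuclideanSpace ℝ (Fin n), ℂ)).injective.comp
      (compCLMOfContinuousLinearEquiv_injective (𝕜 := ℂ) _)

theorem fourierPi_lineDerivOp_single (j : Fin n) (f : 𝓢(Fin n → ℝ, ℂ)) (ξ : Fin n → ℝ) :
    fourierPi n (∂_{(Pi.single j 1 : Fin n → ℝ)} f) ξ
      = 2 * π * Complex.I * ξ j * fourierPi n f ξ := by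
  set e := EuclideanSpace.equiv (Fin n) ℝ
  have hcomp : compCLMOfContinuousLinearEquiv ℂ e (∂_{(Pi.single j 1 : Fin n → ℝ)} f)
      = ∂_{e.symm (Pi.single j 1)} (compCLMOfContinuousLinearEquiv ℂ e f) := by
    rw [lineDerivOp_compCLMOfContinuousLinearEquiv, e.apply_symm_apply]
  have hgrowth : (inner ℝ · (e.symm (Pi.single j 1))).HasTemperateGrowth := by fun_prop
  have hinner : inner ℝ (WithLp.toLp 2 ξ) (e.symm (Pi.single j 1)) = ξ j := by
    simp [e, EuclideanSpace.inner_single_right]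
  rw [fourierPi_apply, fourierPi_apply, hcomp, fourier_lineDerivOp_eq, smul_apply,
    smulLeftCLM_apply_apply hgrowth, hinner, smul_eq_mul, Complex.real_smul]
  ring

end FourierPi

section TransposeSymbol

open MvPolynomial

variable {n : ℕ}

noncomputable def transposeSymbol (a : (Fin n → ℕ) →₀ ℂ) : MvPolynomial (Fin n) ℂ :=
  ∑ p ∈ a.support, monomial (Finsupp.equivFunOnFinite.symm p)
    ((-1) ^ (∑ j, p j) * a p * (2 * π * Complex.I) ^ (∑ j, p j))

theorem eval_transposeSymbol (a : (Fin n → ℕ) →₀ ℂ) (x : Fin n → ℂ) :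
    eval x (transposeSymbol a) = ∑ p ∈ a.support,
      (-1) ^ (∑ j, p j) * a p * (2 * π * Complex.I) ^ (∑ j, p j) * ∏ j, x j ^ p j := by
  simp [transposeSymbol, eval_monomial, Finsupp.prod_fintype]

theorem transposeSymbol_ne_zero {a : (Fin n → ℕ) →₀ ℂ} (ha : a ≠ 0) : transposeSymbol a ≠ 0 := by
  obtain ⟨p, hp⟩ := Finsupp.support_nonempty_iff.2 ha
  intro h
  have hcoeff := congrArg (coeff (Finsupp.equivFunOnFinite.symm p)) h
  rw [transposeSymbol, coeff_sum] at hcoeff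
  simp only [coeff_monomial, Finsupp.equivFunOnFinite.symm.injective.eq_iff, Finset.sum_ite_eq',
    if_pos hp, coeff_zero] at hcoeff
  simp [Real.pi_ne_zero, Complex.I_ne_zero, Finsupp.mem_support_iff.1 hp] at hcoeff

end TransposeSymbol

namespace DRn

variable {n : ℕ}

noncomputable def toSchwartz : DRn n →ₗ[ℂ] 𝓢(Fin n → ℝ, ℂ) where
  toFun φ := φ.2.2.toSchwartzMap φ.2.1
  map_add' _ _ := rfl
  map_smul' _ _ := rfl

theorem toSchwartz_injective : Injective (toSchwartz (n := n)) :=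
  fun _ _ h => Subtype.ext congr(⇑$h)

theorem pd_mem (j : Fin n) {f : (Fin n → ℝ) → ℂ} (hf : f ∈ DRn n) : pd j f ∈ DRn n :=
  ⟨(hf.1.fderiv_right le_rfl).clm_apply contDiff_const, hf.2.fderiv_apply ℝ _⟩

noncomputable def pdₗ (j : Fin n) : Module.End ℂ (DRn n) where
  toFun φ := ⟨pd j φ, pd_mem j φ.2⟩
  map_add' φ ψ := Subtype.ext
    congr(⇑$(lineDerivOp_add (Pi.single j 1 : Fin n → ℝ) (toSchwartz φ) (toSchwartz ψ)))
  map_smul' c φ := Subtype.ext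
    congr(⇑$(lineDerivOp_smul (Pi.single j 1 : Fin n → ℝ) c (toSchwartz φ)))

theorem toSchwartz_pdₗ (j : Fin n) (φ : DRn n) :
    toSchwartz (pdₗ j φ) = ∂_{(Pi.single j 1 : Fin n → ℝ)} (toSchwartz φ) := rfl

noncomputable def multiPDₗ (p : Fin n → ℕ) : Module.End ℂ (DRn n) :=
  ((List.finRange n).map fun j => pdₗ j ^ p j).prod

theorem coe_multiPDₗ (p : Fin n → ℕ) (φ : DRn n) :
    ((multiPDₗ p φ : DRn n) : (Fin n → ℝ) → ℂ) = multiPD p φ := by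
  rw [multiPDₗ, Module.End.coe_list_prod_map_pow]
  exact (Semiconj.list_foldr_iterate (F := Subtype.val) (fun j φ => rfl) p _).eq φ

theorem fourierPi_multiPDₗ (p : Fin n → ℕ) (φ : DRn n) (ξ : Fin n → ℝ) :
    fourierPi n (toSchwartz (multiPDₗ p φ)) ξ
      = (∏ j, (2 * π * Complex.I * ξ j) ^ p j) * fourierPi n (toSchwartz φ) ξ := by
  let χ : Fin n → (Fin n → ℝ) → ℂ := fun j ξ => 2 * π * Complex.I * ξ j
  have hsemiconj : ∀ j, Semiconj (fun φ => ⇑(fourierPi n (toSchwartz φ))) (pdₗ j) (χ j * ·) :=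
    fun j φ => funext fun ξ => by simp only [toSchwartz_pdₗ, fourierPi_lineDerivOp_single]; rfl
  have hfoldr := congrFun ((Semiconj.list_foldr_iterate hsemiconj p (List.finRange n)).eq φ) ξ
  rw [multiPDₗ, Module.End.coe_list_prod_map_pow, hfoldr, List.foldr_iterate_mul_left,
    ← Fin.prod_univ_def]
  simp [χ]

noncomputable def transposeOp (a : (Fin n → ℕ) →₀ ℂ) : Module.End ℂ (DRn n) :=
  ∑ p ∈ a.support, ((-1 : ℂ) ^ (∑ j, p j) * a p) • multiPDₗ p

theorem coe_transposeOp (a : (Fin n → ℕ) →₀ ℂ) (φ : DRn n) :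
    ((transposeOp a φ : DRn n) : (Fin n → ℝ) → ℂ) = fun x => ∑ p ∈ a.support,
      (-1 : ℂ) ^ (∑ j, p j) * a p * multiPD p (φ : (Fin n → ℝ) → ℂ) x := by
  ext x
  simp [transposeOp, coe_multiPDₗ]

theorem fourierPi_transposeOp (a : (Fin n → ℕ) →₀ ℂ) (φ : DRn n) (ξ : Fin n → ℝ) :
    fourierPi n (toSchwartz (transposeOp a φ)) ξ
      = MvPolynomial.eval (fun j => (ξ j : ℂ)) (transposeSymbol a)
        * fourierPi n (toSchwartz φ) ξ := by
  simp only [transposeOp, LinearMap.sum_apply, LinearMap.smul_apply, map_sum, map_smul,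
    sum_apply, smul_apply, fourierPi_multiPDₗ, eval_transposeSymbol, Finset.sum_mul, smul_eq_mul]
  refine Finset.sum_congr rfl fun p _ => ?_
  simp only [mul_pow, Finset.prod_mul_distrib, Finset.prod_pow_eq_pow_sum]
  ring

theorem transposeOp_injective {a : (Fin n → ℕ) →₀ ℂ} (ha : a ≠ 0) :
    Injective (transposeOp (n := n) a) := by
  refine (injective_iff_map_eq_zero _).2 fun φ hφ =>
    toSchwartz_injective <| fourierPi_injective n ?_
  have hmul : ∀ ξ, MvPolynomial.eval (fun j => (ξ j : ℂ)) (transposeSymbol a)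
      * fourierPi n (toSchwartz φ) ξ = 0 := fun ξ => by
    rw [← fourierPi_transposeOp, hφ, map_zero, map_zero, zero_apply]
  have hzero := MvPolynomial.eq_zero_of_forall_eval_mul_eq_zero (transposeSymbol_ne_zero ha)
    (fourierPi n (toSchwartz φ)).continuous hmul
  ext ξ
  simpa using congrFun hzero ξ

end DRn

theorem constCoeff_PDO_has_fundamental_solution_in_algebraicDual_general
    (n : ℕ) (a : (Fin n → ℕ) →₀ ℂ) (ha : a ≠ 0) :
    ∃ S : DRn n →ₗ[ℂ] ℂ, ∀ φ : DRn n,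
      ∃ hmem : (fun x => ∑ p ∈ a.support,
          (-1 : ℂ) ^ (∑ j, p j) * a p * multiPD p (φ : (Fin n → ℝ) → ℂ) x)
          ∈ DRn n,
        S ⟨_, hmem⟩ = (φ : (Fin n → ℝ) → ℂ) 0 := by
  obtain ⟨S, hS⟩ := LinearMap.dualMap_surjective_of_injective (DRn.transposeOp_injective ha)
    ((LinearMap.proj 0).comp (DRn n).subtype)
  refine ⟨S, fun φ => ⟨DRn.coe_transposeOp a φ ▸ (DRn.transposeOp a φ).2, ?_⟩⟩
  exact (congrArg S (Subtype.ext (DRn.coe_transposeOp a φ).symm)).trans congr($hS φ)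

/-- Every nonzero constant-coefficient operator `P(∂) = Σ_p a_p ∂^p` has a
fundamental solution in the algebraic dual `D*(ℝⁿ)`: a linear functional `S`
on `D(ℝⁿ)` with `S(ᵗP(∂)φ) = φ(0)` for all test functions `φ`, i.e.
`P(∂)S = δ`. Here `ᵗP(∂)φ = Σ_p (−1)^{|p|} a_p ∂^p φ ∈ D(ℝⁿ)`. -/
theorem constCoeff_PDO_has_fundamental_solution_in_algebraicDual
    (n : ℕ) (hn : 1 ≤ n) (a : (Fin n → ℕ) →₀ ℂ) (ha : a ≠ 0) :
    ∃ S : DRn n →ₗ[ℂ] ℂ, ∀ φ : DRn n,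
      ∃ hmem : (fun x => ∑ p ∈ a.support,
          (-1 : ℂ) ^ (∑ j, p j) * a p * multiPD p (φ : (Fin n → ℝ) → ℂ) x)
          ∈ DRn n,
        S ⟨_, hmem⟩ = (φ : (Fin n → ℝ) → ℂ) 0 :=
  constCoeff_PDO_has_fundamental_solution_in_algebraicDual_general n a ha
end

section
/- Let Ω ⊆ ℝ³ be open, with coordinates written (x₁, y₁, x₂), and let P(x,∂) = −∂/∂x₁ − i ∂/∂y₁ + 2i(x₁ + i y₁) ∂/∂x₂ be the Lewy operator. Then P(x,∂) : D*(Ω) → D*(Ω) is surjective: for every linear functional F on D(Ω) there exists a linear functional U on D(Ω) such that U((∂φ/∂x₁)(·) + i·(∂φ/∂y₁)(·) − 2i·(x₁ + i·y₁)·(∂φ/∂x₂)(·)) = F(φ) for all φ ∈ D(Ω), where the argument of U is the function x = (x₁,y₁,x₂) ↦ ∂₁φ(x) + i∂₂φ(x) − 2i(x₁ + i y₁)∂₃φ(x), which again belongs to D(Ω). In particular, although the Lewy equation P(x,∂)U = F is in general not solvable in distributions, it is solvable in D*(Ω) for every right-hand side F ∈ D*(Ω). -/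
open Complex

/-- `D(Ω)`: smooth functions `ℝ³ → ℂ` (resp. `ℝⁿ → ℂ`) with compact support
contained in `Ω`. -/
noncomputable def Dspace (n : ℕ) (Ω : Set (Fin n → ℝ)) :
    Submodule ℂ ((Fin n → ℝ) → ℂ) where
  carrier := {φ | ContDiff ℝ (⊤ : ℕ∞) φ ∧ HasCompactSupport φ ∧ tsupport φ ⊆ Ω}
  add_mem' hf hg := ⟨hf.1.add hg.1, hf.2.1.add hg.2.1,
    (tsupport_add _ _).trans (Set.union_subset hf.2.2 hg.2.2)⟩
  zero_mem' := ⟨contDiff_const, HasCompactSupport.zero,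
    by simp [tsupport, Function.support_zero]⟩
  smul_mem' c f hf := ⟨hf.1.const_smul c,
    hf.2.1.mono (Function.support_const_smul_subset c f),
    (closure_mono (Function.support_const_smul_subset c f)).trans hf.2.2⟩

/-!
Transposing, it suffices that `ᵗP = -P` is injective on `D(Ω)`: the dual map of an injective
linear map of vector spaces is surjective. Write points of `ℝ³` as `(z, t)` with
`z = x₁ + i y₁`, `t = x₂`. If `ᵗP φ = 0`, integrating by parts in `t` shows that the moments
`Mₙ(z) = ∫ tⁿ φ(z, t) dt` satisfy `(∂_y - i ∂_x) Mₙ = -2 n z Mₙ₋₁`. By induction every `Mₙ`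
satisfies the Cauchy–Riemann equations, so it is an entire function with compact support and
vanishes by Liouville. Hence all moments of `t ↦ φ(z, t)` vanish, and by Weierstrass
approximation `φ = 0`.
-/

open MeasureTheory Set Function Polynomial Filter Topology

theorem HasCompactSupport.comp_prodMk {X Y M : Type*} [TopologicalSpace X] [TopologicalSpace Y]
    [R1Space Y] [Zero M] {f : X × Y → M} (hf : HasCompactSupport f) (x : X) :
    HasCompactSupport fun y => f (x, y) :=
  .intro (hf.isCompact.image continuous_snd) fun _ hy =>
    image_eq_zero_of_notMem_tsupport fun h => hy ⟨_, h, rfl⟩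

theorem integrable_comp_prodMk {X E : Type*} [TopologicalSpace X] [NormedAddCommGroup E]
    {f : X × ℝ → E} (hf : Continuous f) (hcs : HasCompactSupport f) (x : X) :
    Integrable fun t => f (x, t) :=
  (hf.comp (Continuous.prodMk_right x)).integrable_of_hasCompactSupport (hcs.comp_prodMk x)

theorem hasFDerivAt_integral_of_hasCompactSupport {E F : Type*}
    [NormedAddCommGroup E] [NormedSpace ℝ E] [NormedAddCommGroup F] [NormedSpace ℝ F]
    {f : E → ℝ → F} {f' : E → ℝ → E →L[ℝ] F}
    (hf : Continuous (uncurry f)) (hcs : HasCompactSupport (uncurry f))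
    (hf' : Continuous (uncurry f')) (hcs' : HasCompactSupport (uncurry f'))
    (hderiv : ∀ z t, HasFDerivAt (f · t) (f' z t) z) (z₀ : E) :
    HasFDerivAt (fun z => ∫ t, f z t) (∫ t, f' z₀ t) z₀ := by
  obtain ⟨C, hC⟩ := hf'.bounded_above_of_compact_support hcs'
  set T := Prod.snd '' tsupport (uncurry f')
  have hT : IsCompact T := hcs'.isCompact.image continuous_snd
  have hbound : ∀ z t, ‖f' z t‖ ≤ T.indicator (fun _ => C) t := fun z t => by
    by_cases ht : t ∈ T
    · simpa [indicator_of_mem ht] using hC (z, t)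
    · have hzt : (z, t) ∉ tsupport (uncurry f') := fun h => ht ⟨_, h, rfl⟩
      have hzero : f' z t = 0 := image_eq_zero_of_notMem_tsupport (f := uncurry f') hzt
      rw [indicator_of_notMem ht, hzero, norm_zero]
  exact hasFDerivAt_integral_of_dominated_of_fderiv_le univ_mem
    (.of_forall fun z => (integrable_comp_prodMk hf hcs z).aestronglyMeasurable)
    (integrable_comp_prodMk hf hcs z₀)
    (integrable_comp_prodMk hf' hcs' z₀).aestronglyMeasurable
    (.of_forall fun t z _ => hbound z t)
    ((integrableOn_const hT.measure_lt_top.ne).integrable_indicator hT.measurableSet)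
    (.of_forall fun t z _ => hderiv z t)

theorem Differentiable.eq_zero_of_hasCompactSupport {E F : Type*}
    [NormedAddCommGroup E] [NormedSpace ℂ E] [Nontrivial E]
    [NormedAddCommGroup F] [NormedSpace ℂ F] {f : E → F}
    (hf : Differentiable ℂ f) (hcs : HasCompactSupport f) : f = 0 := by
  obtain ⟨C, hC⟩ := hf.continuous.bounded_above_of_compact_support hcs
  obtain ⟨c, hc⟩ := hf.exists_const_forall_eq_of_bounded
    (isBounded_iff_forall_norm_le.2 ⟨C, forall_mem_range.2 hC⟩)
  obtain ⟨z, hz⟩ := ne_univ_iff_exists_notMem _ |>.1 hcs.isCompact.ne_univ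
  funext w
  rw [hc, ← hc z, image_eq_zero_of_notMem_tsupport hz, Pi.zero_apply]

theorem eq_zero_of_integral_pow_mul_eq_zero {u : ℝ → ℝ} (hu : Continuous u)
    (hcs : HasCompactSupport u) (h : ∀ n : ℕ, ∫ t, t ^ n * u t = 0) : u = 0 := by
  have hint : ∀ {v : ℝ → ℝ}, Continuous v → Integrable fun t => v t * u t := fun hv =>
    (hv.mul hu).integrable_of_hasCompactSupport hcs.mul_left
  have hpoly : ∀ p : ℝ[X], ∫ t, p.eval t * u t = 0 := by
    intro p
    induction p using Polynomial.induction_on' with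
    | add p q hp hq =>
      simp only [eval_add, add_mul]
      rw [integral_add (hint p.continuous) (hint q.continuous), hp, hq, add_zero]
    | monomial n a =>
      simp only [eval_monomial, mul_assoc]
      rw [integral_const_mul, h, mul_zero]
  obtain ⟨S, hS⟩ := hcs.isCompact.isBounded.subset_closedBall 0
  rw [Real.closedBall_eq_Icc, zero_sub, zero_add] at hS
  -- `∫ u² = ∫ (u - p) u` for every polynomial `p`, and `p` can be taken uniformly close to `u`
  have hsmall : ∀ ε > 0, ∫ t, u t * u t ≤ ε * ∫ t, |u t| := by
    intro ε hε
    obtain ⟨p, hp⟩ := exists_polynomial_near_of_continuousOn (-S) S u hu.continuousOn ε hε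
    have hpointwise : ∀ t, (u t - p.eval t) * u t ≤ ε * |u t| := by
      intro t
      by_cases ht : t ∈ Icc (-S) S
      · calc (u t - p.eval t) * u t ≤ |u t - p.eval t| * |u t| := by
              rw [← abs_mul]; exact le_abs_self _
          _ ≤ ε * |u t| := by
              gcongr; rw [abs_sub_comm]; exact (hp t ht).le
      · simp [image_eq_zero_of_notMem_tsupport fun h => ht (hS h)]
    calc ∫ t, u t * u t = ∫ t, (u t - p.eval t) * u t := by
          simp only [sub_mul]
          rw [integral_sub (hint hu) (hint p.continuous), hpoly, sub_zero]
      _ ≤ ∫ t, ε * |u t| :=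
          integral_mono (hint (hu.sub p.continuous))
            ((hu.abs.integrable_of_hasCompactSupport hcs.abs).const_mul ε) hpointwise
      _ = ε * ∫ t, |u t| := integral_const_mul _ _
  have hsq : ∫ t, u t * u t ≤ 0 := by
    have hlim : Tendsto (fun ε : ℝ => ε * ∫ t, |u t|) (𝓝[>] 0) (𝓝 0) :=
      ((continuous_id.mul continuous_const).tendsto' 0 0 (zero_mul _)).mono_left
        nhdsWithin_le_nhds
    exact ge_of_tendsto hlim (eventually_nhdsWithin_of_forall hsmall)
  funext t
  by_contra ht
  have := (hu.mul hu).integral_pos_of_hasCompactSupport_nonneg_nonzero (μ := volume)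
    hcs.mul_left (fun t => mul_self_nonneg (u t)) (mul_self_ne_zero.2 ht)
  simp only [Pi.mul_apply] at this
  linarith

theorem eq_zero_of_integral_ofReal_pow_mul_eq_zero {u : ℝ → ℂ} (hu : Continuous u)
    (hcs : HasCompactSupport u) (h : ∀ n : ℕ, ∫ t : ℝ, (t : ℂ) ^ n * u t = 0) : u = 0 := by
  have hL : ∀ L : ℂ →L[ℝ] ℝ, (fun t => L (u t)) = 0 := fun L =>
    eq_zero_of_integral_pow_mul_eq_zero (L.continuous.comp hu) (hcs.comp_left L.map_zero)
      fun n => by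
        have hint : Integrable fun t : ℝ => (t : ℂ) ^ n * u t :=
          ((continuous_ofReal.pow n).mul hu).integrable_of_hasCompactSupport hcs.mul_left
        have hLn := congrArg L (h n)
        rw [← L.integral_comp_comm hint, map_zero] at hLn
        simpa [← ofReal_pow, ← real_smul] using hLn
  funext t
  exact Complex.ext (congrFun (hL reCLM) t) (congrFun (hL imCLM) t)

theorem integral_ofReal_pow_mul_eq_neg {g g' : ℝ → ℂ} (hg : ∀ t, HasDerivAt g (g' t) t)
    (hg' : Continuous g') (hcs : HasCompactSupport g) (n : ℕ) :
    ∫ t : ℝ, (t : ℂ) ^ n * g' t = -(n * ∫ t : ℝ, (t : ℂ) ^ (n - 1) * g t) := by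
  -- for `n = 0` both sides vanish, whatever the truncated `n - 1` is
  have hcont : Continuous g := continuous_iff_continuousAt.2 fun t => (hg t).continuousAt
  have hcs' : HasCompactSupport g' := by
    rw [show g' = deriv g from funext fun t => (hg t).deriv.symm]
    exact hcs.deriv
  have hint : ∀ {k : ℕ} {v : ℝ → ℂ}, Continuous v → HasCompactSupport v →
      Integrable fun t : ℝ => (t : ℂ) ^ k * v t := fun hv hvs =>
    ((continuous_ofReal.pow _).mul hv).integrable_of_hasCompactSupport hvs.mul_left
  rw [integral_mul_deriv_eq_deriv_mul_of_integrable (u' := fun t => n * (t : ℂ) ^ (n - 1))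
    (fun t _ => (hasDerivAt_pow n (t : ℂ)).comp_ofReal) (fun t _ => hg t)
    (hint hg' hcs')
    (((hint (k := n - 1) hcont hcs).const_mul n).congr (.of_forall fun t => by simp [mul_assoc]))
    (hint hcont hcs)]
  simp only [mul_assoc, integral_const_mul]

section PartialDerivative

variable {n : ℕ} (j : Fin n) {φ ψ : (Fin n → ℝ) → ℂ}

theorem pd_add (hφ : Differentiable ℝ φ) (hψ : Differentiable ℝ ψ) :
    pd j (φ + ψ) = pd j φ + pd j ψ := by
  ext x
  simp [pd, fderiv_add (hφ x) (hψ x)]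

theorem pd_const_smul (c : ℂ) (hφ : Differentiable ℝ φ) : pd j (c • φ) = c • pd j φ := by
  ext x
  simp [pd, fderiv_const_smul (hφ x) c]

theorem contDiff_pd (hφ : ContDiff ℝ (⊤ : ℕ∞) φ) : ContDiff ℝ (⊤ : ℕ∞) (pd j φ) :=
  (hφ.fderiv_right (m := (⊤ : ℕ∞)) le_rfl).clm_apply contDiff_const

theorem tsupport_pd_subset : tsupport (pd j φ) ⊆ tsupport φ :=
  (tsupport_comp_subset (g := fun L : (Fin n → ℝ) →L[ℝ] ℂ => L (Pi.single j 1)) rfl _).trans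
    (tsupport_fderiv_subset ℝ)

end PartialDerivative

namespace Lewy

section Moment

variable {E : Type*} [NormedAddCommGroup E] [NormedSpace ℂ E]

noncomputable def moment (ψ : ℂ × ℝ → E) (n : ℕ) (z : ℂ) : E :=
  ∫ t : ℝ, (t : ℂ) ^ n • ψ (z, t)

theorem integrable_ofReal_pow_smul {ψ : ℂ × ℝ → E} (hψ : Continuous ψ)
    (hcs : HasCompactSupport ψ) (n : ℕ) (z : ℂ) :
    Integrable fun t : ℝ => (t : ℂ) ^ n • ψ (z, t) :=
  integrable_comp_prodMk (f := fun p : ℂ × ℝ => (p.2 : ℂ) ^ n • ψ p) (by fun_prop)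
    (hcs.smul_left (f := fun p : ℂ × ℝ => (p.2 : ℂ) ^ n)) z

theorem hasCompactSupport_moment {ψ : ℂ × ℝ → E} (hcs : HasCompactSupport ψ) (n : ℕ) :
    HasCompactSupport (moment ψ n) :=
  .intro (hcs.isCompact.image continuous_fst) fun z hz => by
    have hzero : ∀ t, ψ (z, t) = 0 := fun t =>
      image_eq_zero_of_notMem_tsupport fun h => hz ⟨_, h, rfl⟩
    simp [moment, hzero]

end Moment

noncomputable def transposeProd (ψ : ℂ × ℝ → ℂ) (p : ℂ × ℝ) : ℂ :=
  fderiv ℝ ψ p (1, 0) + I * fderiv ℝ ψ p (I, 0) - 2 * I * p.1 * fderiv ℝ ψ p (0, 1)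

variable {ψ : ℂ × ℝ → ℂ}

theorem hasFDerivAt_moment (hψ : ContDiff ℝ 1 ψ) (hcs : HasCompactSupport ψ) (n : ℕ) (z : ℂ) :
    HasFDerivAt (moment ψ n) (moment (fun p => (fderiv ℝ ψ p).comp (.inl ℝ ℂ ℝ)) n z) z := by
  refine hasFDerivAt_integral_of_hasCompactSupport (f := fun z t => (t : ℂ) ^ n • ψ (z, t))
    (f' := fun z t => (t : ℂ) ^ n • (fderiv ℝ ψ (z, t)).comp (.inl ℝ ℂ ℝ)) (by fun_prop)
    (hcs.smul_left (f := fun p : ℂ × ℝ => (p.2 : ℂ) ^ n))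
    (((continuous_ofReal.comp continuous_snd).pow n).smul
      ((hψ.continuous_fderiv one_ne_zero).clm_comp continuous_const))
    (((hcs.fderiv ℝ).comp_left (g := fun L : ℂ × ℝ →L[ℝ] ℂ => L.comp (.inl ℝ ℂ ℝ))
      (ContinuousLinearMap.zero_comp _)).smul_left (f := fun p : ℂ × ℝ => (p.2 : ℂ) ^ n))
    (fun z t => ?_) z
  exact ((hψ.differentiable one_ne_zero (z, t)).hasFDerivAt.comp z
    (hasFDerivAt_prodMk_left (𝕜 := ℝ) z t)).const_smul ((t : ℂ) ^ n)

theorem moment_fderiv_comp_inl_apply (hψ : ContDiff ℝ 1 ψ) (hcs : HasCompactSupport ψ) (n : ℕ)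
    (z w : ℂ) : moment (fun p => (fderiv ℝ ψ p).comp (.inl ℝ ℂ ℝ)) n z w =
      moment (fun p => fderiv ℝ ψ p (w, 0)) n z :=
  ContinuousLinearMap.integral_apply (integrable_ofReal_pow_smul
    ((hψ.continuous_fderiv one_ne_zero).clm_comp continuous_const)
    ((hcs.fderiv ℝ).comp_left (g := fun L : ℂ × ℝ →L[ℝ] ℂ => L.comp (.inl ℝ ℂ ℝ))
      (ContinuousLinearMap.zero_comp _)) n z) w

theorem moment_fderiv_snd (hψ : ContDiff ℝ 1 ψ) (hcs : HasCompactSupport ψ) (n : ℕ) (z : ℂ) :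
    moment (fun p => fderiv ℝ ψ p (0, 1)) n z = -(n * moment ψ (n - 1) z) :=
  integral_ofReal_pow_mul_eq_neg
    (fun t => (hψ.differentiable one_ne_zero (z, t)).hasFDerivAt.comp_hasDerivAt t
      ((hasDerivAt_const t z).prodMk (hasDerivAt_id t)))
    (((hψ.continuous_fderiv one_ne_zero).comp (Continuous.prodMk_right z)).clm_apply
      continuous_const)
    (hcs.comp_prodMk z) n

theorem fderiv_moment_I_sub (hψ : ContDiff ℝ 1 ψ) (hcs : HasCompactSupport ψ)
    (hlewy : transposeProd ψ = 0) (n : ℕ) (z : ℂ) :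
    fderiv ℝ (moment ψ n) z I - I * fderiv ℝ (moment ψ n) z 1 =
      -(2 * z * (n * moment ψ (n - 1) z)) := by
  have hint : ∀ v, Integrable fun t : ℝ => (t : ℂ) ^ n • fderiv ℝ ψ (z, t) v := fun v =>
    integrable_ofReal_pow_smul ((hψ.continuous_fderiv one_ne_zero).clm_apply continuous_const)
      (hcs.fderiv_apply (𝕜 := ℝ) v) n z
  rw [(hasFDerivAt_moment hψ hcs n z).fderiv, moment_fderiv_comp_inl_apply hψ hcs,
    moment_fderiv_comp_inl_apply hψ hcs, ← mul_neg, ← moment_fderiv_snd hψ hcs n z, moment,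
    moment, moment, ← integral_const_mul, ← integral_sub (hint _) ((hint _).const_mul I),
    ← integral_const_mul]
  congr 1
  funext t
  simp only [smul_eq_mul]
  have hlewy_t : transposeProd ψ (z, t) = 0 := congrFun hlewy (z, t)
  simp only [transposeProd] at hlewy_t
  linear_combination (-I * (t : ℂ) ^ n) * hlewy_t + ((t : ℂ) ^ n *
    (fderiv ℝ ψ (z, t) (I, 0) - 2 * z * fderiv ℝ ψ (z, t) (0, 1))) * I_sq

theorem moment_eq_zero (hψ : ContDiff ℝ 1 ψ) (hcs : HasCompactSupport ψ)
    (hlewy : transposeProd ψ = 0) (n : ℕ) : moment ψ n = 0 := by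
  -- Cauchy–Riemann: once the previous moment vanishes, `moment ψ n` is entire.
  have step : ∀ n : ℕ, (∀ z, (n : ℂ) * moment ψ (n - 1) z = 0) → moment ψ n = 0 := by
    refine fun n hprev => Differentiable.eq_zero_of_hasCompactSupport (fun z => ?_)
      (hasCompactSupport_moment hcs n)
    have hCR := fderiv_moment_I_sub hψ hcs hlewy n z
    rw [hprev z, mul_zero, neg_zero, sub_eq_zero] at hCR
    exact differentiableAt_complex_iff_differentiableAt_real.2
      ⟨(hasFDerivAt_moment hψ hcs n z).differentiableAt, hCR⟩
  induction n with
  | zero => exact step 0 fun z => by simp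
  | succ n ih => exact step (n + 1) fun z => by simp [ih]

theorem eq_zero_of_lewy (hψ : ContDiff ℝ 1 ψ) (hcs : HasCompactSupport ψ)
    (hlewy : transposeProd ψ = 0) : ψ = 0 := by
  funext ⟨z, t⟩
  exact congrFun (eq_zero_of_integral_ofReal_pow_mul_eq_zero
    (hψ.continuous.comp (Continuous.prodMk_right z)) (hcs.comp_prodMk z)
    fun n => congrFun (moment_eq_zero hψ hcs hlewy n) z) t

noncomputable def coords : (ℂ × ℝ) ≃L[ℝ] (Fin 3 → ℝ) :=
  LinearEquiv.toContinuousLinearEquiv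
    { toFun := fun p => ![p.1.re, p.1.im, p.2]
      invFun := fun x => (⟨x 0, x 1⟩, x 2)
      map_add' := fun p q => by ext i; fin_cases i <;> simp
      map_smul' := fun c p => by ext i; fin_cases i <;> simp
      left_inv := fun p => by simp
      right_inv := fun x => by ext i; fin_cases i <;> simp }

noncomputable def transpose (φ : (Fin 3 → ℝ) → ℂ) : (Fin 3 → ℝ) → ℂ := fun x =>
  pd 0 φ x + I * pd 1 φ x - 2 * I * ((x 0 : ℂ) + I * (x 1 : ℂ)) * pd 2 φ x

theorem transposeProd_comp_coords (φ : (Fin 3 → ℝ) → ℂ) :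
    transposeProd (φ ∘ coords) = transpose φ ∘ coords := by
  funext p
  have hz : (coords p 0 : ℂ) + I * coords p 1 = p.1 := by simp [coords, mul_comm I, re_add_im]
  have he₁ : coords (1, 0) = Pi.single 0 1 := by ext i; fin_cases i <;> simp [coords]
  have he₂ : coords (I, 0) = Pi.single 1 1 := by ext i; fin_cases i <;> simp [coords]
  have he₃ : coords (0, 1) = Pi.single 2 1 := by ext i; fin_cases i <;> simp [coords]
  simp only [transposeProd, transpose, pd, coords.comp_right_fderiv, comp_apply,
    ContinuousLinearMap.comp_apply, ContinuousLinearEquiv.coe_coe, he₁, he₂, he₃, hz]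

theorem eq_zero_of_transpose_eq_zero {φ : (Fin 3 → ℝ) → ℂ} (hφ : ContDiff ℝ 1 φ)
    (hcs : HasCompactSupport φ) (h : transpose φ = 0) : φ = 0 := by
  have hψ : φ ∘ coords = 0 :=
    eq_zero_of_lewy (hφ.comp coords.contDiff) (hcs.comp_homeomorph coords.toHomeomorph)
      (by rw [transposeProd_comp_coords, h]; rfl)
  funext x
  simpa using congrFun hψ (coords.symm x)

theorem transpose_mem {Ω : Set (Fin 3 → ℝ)} {φ : (Fin 3 → ℝ) → ℂ} (hφ : φ ∈ Dspace 3 Ω) :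
    transpose φ ∈ Dspace 3 Ω := by
  obtain ⟨hsmooth, hcs, hΩ⟩ := hφ
  have hsupp : support (transpose φ) ⊆ tsupport φ := fun x hx => by
    by_contra hxφ
    have hpd : ∀ j, pd j φ x = 0 := fun j =>
      image_eq_zero_of_notMem_tsupport fun h => hxφ (tsupport_pd_subset j h)
    simp [transpose, hpd] at hx
  refine ⟨?_, hcs.mono' hsupp, (closure_minimal hsupp (isClosed_tsupport φ)).trans hΩ⟩
  have := fun j => contDiff_pd j hsmooth
  have : ContDiff ℝ (⊤ : ℕ∞) fun r : ℝ => (r : ℂ) := ofRealCLM.contDiff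
  unfold transpose
  fun_prop

noncomputable def transposeₗ (Ω : Set (Fin 3 → ℝ)) : Dspace 3 Ω →ₗ[ℂ] Dspace 3 Ω where
  toFun φ := ⟨transpose φ, transpose_mem φ.2⟩
  map_add' φ ψ := by
    have hφ := φ.2.1.differentiable (by simp)
    have hψ := ψ.2.1.differentiable (by simp)
    ext x
    simp only [transpose, Submodule.coe_add, pd_add _ hφ hψ, Pi.add_apply]
    ring
  map_smul' c φ := by
    have hφ := φ.2.1.differentiable (by simp)
    ext x
    simp only [transpose, Submodule.coe_smul, pd_const_smul _ c hφ, Pi.smul_apply, smul_eq_mul,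
      RingHom.id_apply]
    ring

theorem transposeₗ_injective (Ω : Set (Fin 3 → ℝ)) : Function.Injective (transposeₗ Ω) := by
  refine (injective_iff_map_eq_zero _).2 fun φ h => Subtype.ext ?_
  exact eq_zero_of_transpose_eq_zero (φ.2.1.of_le (by simp)) φ.2.2.1 (congrArg Subtype.val h)

end Lewy

theorem lewy_operator_surjective_on_algebraicDual_general
    (Ω : Set (Fin 3 → ℝ))
    (F : Dspace 3 Ω →ₗ[ℂ] ℂ) :
    ∃ U : Dspace 3 Ω →ₗ[ℂ] ℂ, ∀ φ : Dspace 3 Ω,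
      ∃ hmem : (fun x : Fin 3 → ℝ =>
          pd (0 : Fin 3) (φ : (Fin 3 → ℝ) → ℂ) x
            + I * pd (1 : Fin 3) (φ : (Fin 3 → ℝ) → ℂ) x
            - 2 * I * ((x 0 : ℂ) + I * (x 1 : ℂ))
                * pd (2 : Fin 3) (φ : (Fin 3 → ℝ) → ℂ) x)
          ∈ Dspace 3 Ω,
        U ⟨_, hmem⟩ = F φ := by
  obtain ⟨U, hU⟩ := LinearMap.dualMap_surjective_of_injective (Lewy.transposeₗ_injective Ω) F
  exact ⟨U, fun φ => ⟨Lewy.transpose_mem φ.2, LinearMap.congr_fun hU φ⟩⟩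

/-- The Lewy operator `P(x,∂) = −∂/∂x₁ − i ∂/∂y₁ + 2i(x₁ + i y₁) ∂/∂x₂` is
surjective on the algebraic dual `D*(Ω)` for every open `Ω ⊆ ℝ³`: for every
linear functional `F` on `D(Ω)` there is a linear functional `U` on `D(Ω)`
with `U(−P(x,∂)φ) = F(φ)` for all test functions `φ`, where the transposed
operator `−P(x,∂)φ : x ↦ ∂₁φ(x) + i∂₂φ(x) − 2i(x₁ + i y₁)∂₃φ(x)` again
belongs to `D(Ω)`. -/
theorem lewy_operator_surjective_on_algebraicDual
    (Ω : Set (Fin 3 → ℝ)) (hΩ : IsOpen Ω)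
    (F : Dspace 3 Ω →ₗ[ℂ] ℂ) :
    ∃ U : Dspace 3 Ω →ₗ[ℂ] ℂ, ∀ φ : Dspace 3 Ω,
      ∃ hmem : (fun x : Fin 3 → ℝ =>
          pd (0 : Fin 3) (φ : (Fin 3 → ℝ) → ℂ) x
            + I * pd (1 : Fin 3) (φ : (Fin 3 → ℝ) → ℂ) x
            - 2 * I * ((x 0 : ℂ) + I * (x 1 : ℂ))
                * pd (2 : Fin 3) (φ : (Fin 3 → ℝ) → ℂ) x)
          ∈ Dspace 3 Ω,
        U ⟨_, hmem⟩ = F φ :=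
  lewy_operator_surjective_on_algebraicDual_general Ω F
end
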